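/- arXiv:2209.08186 — 2 statements merged into one kernel-verified Lean document; each statement's English description precedes it below -/
import Mathlib

section
/- Let a > −1, let s be a positive integer and let n ≥ s be an integer. Then for all real t, J_n^{(a,−s)}(t) = ((n−s)!/n!) · (1+t)^s · P̂_{n−s}^{(a,s)}(t). -/
open MeasureTheory Finset

noncomputable section

/-- Pochhammer symbol `(x)_k`. -/
def poch (x : ℝ) (k : ℕ) : ℝ := (ascPochhammer ℝ k).eval x

/-- Jacobi polynomial `P_n^{(a,b)}` for real parameters. -/
def jacobiP (a b : ℝ) (n : ℕ) (t : ℝ) : ℝ :=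
  (poch (a + 1) n / (n.factorial : ℝ)) *
    ∑ k ∈ Finset.range (n + 1),
      poch (-(n : ℝ)) k * poch ((n : ℝ) + a + b + 1) k /
        ((k.factorial : ℝ) * poch (a + 1) k) * ((1 - t) / 2) ^ k

/-- Normalizing constant `A_n^{(a,b)}`. -/
def jacobiA (a b : ℝ) (n : ℕ) : ℝ := 2 ^ n / poch ((n : ℝ) + a + b + 1) n

/-- Normalized Jacobi polynomial `P̂_n^{(a,b)}`. -/
def jacobiPhat (a b : ℝ) (n : ℕ) (t : ℝ) : ℝ := jacobiA a b n * jacobiP a b n t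

/-- The polynomials `J_n^{(a-s,b-s)}` (defined from the parameters `a, b > -1`). -/
def jacobiJ (a b : ℝ) (s n : ℕ) (t : ℝ) : ℝ :=
  if n < s then (1 + t) ^ n / (n.factorial : ℝ)
  else ∫ u in (-1 : ℝ)..t, (t - u) ^ (s - 1) / ((s - 1).factorial : ℝ) * jacobiPhat a b (n - s) u

/-- The polynomials `J_n^{(a,-s)}`, built from `P̂^{(a+s,0)}`. -/
def jacobiJneg (a : ℝ) (s n : ℕ) (t : ℝ) : ℝ := jacobiJ (a + s) 0 s n t

/-! The key identity is the Rodrigues-type derivative formula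
`d/dt [(1+t)^(b+1) P̂_m^{(α,b+1)}(t)] = (m+b+1) (1+t)^b P̂_m^{(α+1,b)}(t)`, which reduces, in the
variable `x = (1-t)/2`, to a contiguous relation between the hypergeometric coefficients of the two
polynomials. Hence `g_j(t) = (1+t)^j P̂_m^{(a+s-j,j)}(t) / (m+j)!`, `0 ≤ j ≤ s`, is a chain of
antiderivatives (`g_{j+1}' = g_j`) that vanish at `-1` for `j ≥ 1`. By Cauchy's formula for
repeated integration, the `s`-fold integral of `g_0 = P̂_m^{(a+s,0)} / m!` defining
`J_{m+s}^{(a,-s)} / m!` is therefore `g_s`. -/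

open Nat Polynomial

theorem integral_sub_pow_div_factorial_mul_eq {g : ℕ → ℝ → ℝ} {c : ℝ} {N : ℕ}
    (hcont : ∀ j < N, Continuous (g j))
    (hderiv : ∀ j < N, ∀ x, HasDerivAt (g (j + 1)) (g j x) x)
    (hzero : ∀ j < N, g (j + 1) c = 0) (t : ℝ) {p q : ℕ} (hpq : p + q + 1 ≤ N) :
    ∫ u in c..t, (t - u) ^ p / p ! * g q u = g (p + q + 1) t := by
  induction p generalizing q with
  | zero =>
    simpa [hzero q (by omega)] using intervalIntegral.integral_eq_sub_of_hasDerivAt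
      (fun x _ => hderiv q (by omega) x) ((hcont q (by omega)).intervalIntegrable c t)
  | succ p ih =>
    have hkernel : ∀ x, HasDerivAt (fun x => (t - x) ^ (p + 1) / (p + 1)! : ℝ → ℝ)
        (-((t - x) ^ p / p !)) x := by
      intro x
      refine ((((hasDerivAt_id' x).const_sub t).fun_pow (p + 1)).div_const
        ((p + 1)! : ℝ)).congr_deriv ?_
      rw [Nat.factorial_succ]
      push_cast
      field_simp
    have hkernel_cont : Continuous fun x : ℝ => -((t - x) ^ p / p ! : ℝ) := by fun_prop
    rw [intervalIntegral.integral_mul_deriv_eq_deriv_mul (fun x _ => hkernel x)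
      (fun x _ => hderiv q (by omega) x) (hkernel_cont.intervalIntegrable c t)
      ((hcont q (by omega)).intervalIntegrable c t)]
    simp only [sub_self, hzero q (by omega), neg_mul, intervalIntegral.integral_neg]
    rw [ih (by omega), show p + (q + 1) + 1 = p + 1 + q + 1 by omega]
    simp

lemma poch_succ (x : ℝ) (k : ℕ) : poch x (k + 1) = poch x k * (x + k) :=
  ascPochhammer_succ_eval k x

lemma poch_succ_left (x : ℝ) (k : ℕ) : poch x (k + 1) = x * poch (x + 1) k := by
  simp [poch, ascPochhammer_succ_left, eval_comp]

lemma poch_pos {x : ℝ} (hx : 0 < x) (k : ℕ) : 0 < poch x k :=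
  ascPochhammer_pos k x hx

lemma poch_neg_natCast_of_lt {m k : ℕ} (h : m < k) : poch (-(m : ℝ)) k = 0 :=
  ascPochhammer_eval_neg_coe_nat_of_lt h

def jacobiCoeff (α β : ℝ) (m k : ℕ) : ℝ :=
  poch (-(m : ℝ)) k * poch ((m : ℝ) + α + β + 1) k / ((k ! : ℝ) * poch (α + 1) k)

def jacobiPoly (α β : ℝ) (m : ℕ) : ℝ[X] :=
  ∑ k ∈ range (m + 1), C (jacobiCoeff α β m k) * X ^ k

lemma jacobiP_eq_eval (α β : ℝ) (m : ℕ) (t : ℝ) :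
    jacobiP α β m t = poch (α + 1) m / m ! * (jacobiPoly α β m).eval ((1 - t) / 2) := by
  simp [jacobiP, jacobiPoly, jacobiCoeff, eval_finsetSum]

@[fun_prop]
lemma continuous_jacobiPhat (α β : ℝ) (m : ℕ) : Continuous (jacobiPhat α β m) := by
  have h : jacobiPhat α β m = fun t => jacobiA α β m * (poch (α + 1) m / m ! *
      (jacobiPoly α β m).eval ((1 - t) / 2)) := by
    funext t
    rw [jacobiPhat, jacobiP_eq_eval]
  rw [h]
  fun_prop

lemma jacobiCoeff_eq_zero_of_lt (α β : ℝ) {m k : ℕ} (h : m < k) : jacobiCoeff α β m k = 0 := by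
  simp [jacobiCoeff, poch_neg_natCast_of_lt h]

lemma coeff_jacobiPoly (α β : ℝ) (m k : ℕ) :
    (jacobiPoly α β m).coeff k = jacobiCoeff α β m k := by
  simp only [jacobiPoly, finsetSum_coeff, coeff_C_mul_X_pow]
  rw [Finset.sum_ite_eq]
  split_ifs with hk
  · rfl
  · exact (jacobiCoeff_eq_zero_of_lt α β (by simpa [Nat.lt_succ_iff] using hk)).symm

lemma coeff_X_mul_derivative {R : Type*} [Semiring R] (p : R[X]) (n : ℕ) :
    (X * derivative p).coeff n = p.coeff n * n := by
  cases n <;> simp [coeff_derivative]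

lemma jacobiCoeff_contiguous {α : ℝ} (hα : -1 < α) (β : ℝ) (m k : ℕ) :
    poch (α + 1) m * ((β + 1 + k) * jacobiCoeff α (β + 1) m k
        - (k + 1) * jacobiCoeff α (β + 1) m (k + 1))
      = (m + β + 1) * poch (α + 2) m * jacobiCoeff (α + 1) β m k := by
  have hα1 : 0 < α + 1 := by linarith
  have hshift : ∀ j : ℕ, poch (α + 2) j = poch (α + 1) j * (α + 1 + j) / (α + 1) := by
    intro j
    rw [← poch_succ, poch_succ_left, show α + 1 + 1 = α + 2 by ring]
    field_simp
  have hpos := poch_pos hα1 k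
  unfold jacobiCoeff
  rw [show α + 1 + 1 = α + 2 by ring, show (m : ℝ) + (α + 1) + β + 1 = m + α + (β + 1) + 1 by ring,
    hshift m, hshift k, poch_succ (-(m : ℝ)) k, poch_succ _ k, poch_succ (α + 1) k,
    Nat.factorial_succ]
  push_cast
  field_simp
  ring

lemma jacobiPoly_contiguous {α : ℝ} (hα : -1 < α) (β : ℝ) (m : ℕ) :
    C (poch (α + 1) m) * (C (β + 1) * jacobiPoly α (β + 1) m
        - (1 - X) * derivative (jacobiPoly α (β + 1) m))
      = C ((m + β + 1) * poch (α + 2) m) * jacobiPoly (α + 1) β m := by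
  ext k
  simp only [coeff_C_mul, coeff_sub, sub_mul, one_mul, coeff_X_mul_derivative, coeff_derivative,
    coeff_jacobiPoly, ← jacobiCoeff_contiguous hα]
  ring

lemma hasDerivAt_one_add_pow_mul_jacobiPhat {α : ℝ} (hα : -1 < α) (b m : ℕ) (t : ℝ) :
    HasDerivAt (fun t => (1 + t) ^ (b + 1) * jacobiPhat α (b + 1) m t)
      ((m + b + 1) * ((1 + t) ^ b * jacobiPhat (α + 1) b m t)) t := by
  set P := jacobiPoly α (b + 1) m
  set K := jacobiA (α + 1) b m / (m ! : ℝ)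
  have hA : jacobiA α (b + 1) m = jacobiA (α + 1) b m := by
    simp only [jacobiA]
    ring_nf
  have hfun : (fun t => (1 + t) ^ (b + 1) * jacobiPhat α (b + 1) m t)
      = fun t => K * ((1 + t) ^ (b + 1) * (poch (α + 1) m * P.eval ((1 - t) / 2))) := by
    funext t
    rw [jacobiPhat, jacobiP_eq_eval, hA]
    ring
  have hpow : HasDerivAt (fun t : ℝ => (1 + t) ^ (b + 1)) ((b + 1) * (1 + t) ^ b) t := by
    simpa using ((hasDerivAt_id t).const_add 1).fun_pow (b + 1)
  have hx : HasDerivAt (fun t : ℝ => (1 - t) / 2) (-1 / 2) t := by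
    simpa using ((hasDerivAt_id t).const_sub 1).div_const 2
  have hP : HasDerivAt (fun t => P.eval ((1 - t) / 2)) (P.derivative.eval ((1 - t) / 2) * (-1 / 2))
      t := (P.hasDerivAt _).comp t hx
  have hode := congrArg (eval ((1 - t) / 2)) (jacobiPoly_contiguous hα b m)
  simp only [eval_mul, eval_C, eval_sub, eval_one, eval_X] at hode
  rw [hfun]
  refine ((hpow.mul (hP.const_mul _)).const_mul K).congr_deriv ?_
  rw [jacobiPhat, jacobiP_eq_eval, show α + 1 + 1 = α + 2 by ring]
  linear_combination K * (1 + t) ^ b * hode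

lemma hasDerivAt_one_add_pow_mul_jacobiPhat_div_factorial {α : ℝ} (hα : -1 < α) (b m : ℕ)
    (t : ℝ) :
    HasDerivAt (fun t => (1 + t) ^ (b + 1) * jacobiPhat α (b + 1) m t / (m + b + 1)!)
      ((1 + t) ^ b * jacobiPhat (α + 1) b m t / (m + b)!) t := by
  refine ((hasDerivAt_one_add_pow_mul_jacobiPhat hα b m t).div_const _).congr_deriv ?_
  rw [Nat.factorial_succ]
  push_cast
  field_simp

/-- closed form of `J_n^{(a,-s)}` for `n ≥ s`. -/
theorem jacobiJneg_eq (a : ℝ) (ha : -1 < a) (s : ℕ) (hs : 1 ≤ s) (n : ℕ) (hn : s ≤ n) (t : ℝ) :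
    jacobiJneg a s n t
      = ((n - s).factorial : ℝ) / (n.factorial : ℝ) * (1 + t) ^ s * jacobiPhat a s (n - s) t := by
  obtain ⟨m, rfl⟩ := Nat.exists_eq_add_of_le' hn
  set g : ℕ → ℝ → ℝ := fun j t => (1 + t) ^ j * jacobiPhat (a + s - j) j m t / (m + j)!
  have hderiv : ∀ j < s, ∀ x, HasDerivAt (g (j + 1)) (g j x) x := by
    intro j hj x
    have hjs : (j : ℝ) + 1 ≤ s := by exact_mod_cast hj
    have h := hasDerivAt_one_add_pow_mul_jacobiPhat_div_factorial
      (α := a + s - (j + 1)) (by linarith) j m x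
    simp only [g]
    push_cast
    convert h using 3 <;> ring_nf
  have hcauchy := integral_sub_pow_div_factorial_mul_eq (g := g) (c := -1) (p := s - 1) (q := 0)
    (fun j _ => by simp only [g]; fun_prop) hderiv (fun j _ => by simp [g]) t (by omega)
  rw [jacobiJneg, jacobiJ, if_neg (by omega), Nat.add_sub_cancel]
  rw [show s - 1 + 0 + 1 = s by omega] at hcauchy
  simp only [g, pow_zero, one_mul, Nat.cast_zero, sub_zero, add_zero, add_sub_cancel_right,
    ← mul_div_assoc, intervalIntegral.integral_div] at hcauchy
  rw [div_eq_iff (by positivity)] at hcauchy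
  rw [hcauchy]
  ring

end
end

section
/- Let d ≥ 2, let s be a positive integer, β > −d−s, and let Y be a solid harmonic of degree m ≤ n on ℝ^d. (i) If m ≤ n−s, then for all (x,t) ∈ ℝ^d × ℝ, ∂_t^s S_{m,Y}^{n,(β,−s)}(x,t) = (−2)^s A_{n−s−m}^{(s+2m+β+d−1,0)} · P_{n−s−m}^{(s+2m+β+d−1,0)}(1−2t) Y(x), while ∂_t^s S_{m,Y}^{n,(β,−s)} ≡ 0 if m > n−s. (ii) For every integer 1 ≤ k ≤ s−1 and every ξ ∈ S^{d−1}: ∂_t^k S_{m,Y}^{n,(β,−s)}(ξ,1) = (−2)^k Y(ξ) δ_{k,n−m} if m > n−s, and ∂_t^k S_{m,Y}^{n,(β,−s)}(ξ,1) = 0 if m ≤ n−s. -/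
open MeasureTheory Finset

noncomputable section

/-- Normalization constant `c_{a,b}`. -/
def cconst (a b : ℝ) : ℝ := Real.Gamma (a + b + 2) / (Real.Gamma (a + 1) * Real.Gamma (b + 1))

/-- Norm square `h_n^{(a,b)}`. -/
def hJac (a b : ℝ) (n : ℕ) : ℝ :=
  poch (a + 1) n * poch (b + 1) n * (a + b + n + 1) /
    ((n.factorial : ℝ) * poch (a + b + 2) n * (a + b + 2 * n + 1))

/-- Norm square `ĥ_n^{(a,b)}`. -/
def hHat (a b : ℝ) (n : ℕ) : ℝ := 2 ^ (a + b + 1) / cconst a b * (jacobiA a b n) ^ 2 * hJac a b n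

/-- Euclidean space `ℝ^d`. -/
abbrev Euc (d : ℕ) : Type := EuclideanSpace ℝ (Fin d)

/-- The surface measure on the unit sphere `S^{d-1} ⊂ ℝ^d`. -/
def sphMeasure (d : ℕ) : Measure (Metric.sphere (0 : Euc d) 1) :=
  (volume : Measure (Euc d)).toSphere

/-- Surface area `ω_d` of the unit sphere. -/
def omegaS (d : ℕ) : ℝ := (sphMeasure d Set.univ).toReal

/-- Integral over the sphere of a function defined on `ℝ^d`. -/
def sphInt (d : ℕ) (g : Euc d → ℝ) : ℝ := ∫ ξ, g (ξ : Euc d) ∂(sphMeasure d)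

/-- The conic surface `V_0^{d+1} = {(x,t) : ‖x‖ = t, 0 ≤ t ≤ 1}` as a subset of `ℝ^d × ℝ`. -/
def coneSet (d : ℕ) : Set (Euc d × ℝ) := {p | ‖p.1‖ = p.2 ∧ 0 ≤ p.2 ∧ p.2 ≤ 1}

/-- The integral `∫_{V_0^{d+1}} f dm`. -/
def coneInt (d : ℕ) (f : Euc d × ℝ → ℝ) : ℝ :=
  ∫ t in (0 : ℝ)..1, t ^ (d - 1) * sphInt d (fun ξ => f (t • ξ, t))

/-- `∂_t^k f`: the `k`-th partial derivative in the last variable `t`, with `x` fixed. -/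
def pdT (k : ℕ) (f : Euc d × ℝ → ℝ) : Euc d × ℝ → ℝ :=
  fun p => iteratedDeriv k (fun τ => f (p.1, τ)) p.2

/-- A solid harmonic of degree `m` on `ℝ^d`: a homogeneous polynomial annihilated by the
Laplacian. -/
def IsSolidHarmonic (d m : ℕ) (Y : Euc d → ℝ) : Prop :=
  ∃ q : MvPolynomial (Fin d) ℝ, q.IsHomogeneous m ∧
    (∑ i : Fin d, MvPolynomial.pderiv i (MvPolynomial.pderiv i q)) = 0 ∧
    ∀ x : Euc d, Y x = MvPolynomial.eval (fun i => x i) q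

/-- The ordinary inner product `⟨f,g⟩_{β,γ}` on the conic surface. -/
def coneInner (d : ℕ) (β γ : ℝ) (f g : Euc d × ℝ → ℝ) : ℝ :=
  cconst (β + d - 1) γ / omegaS d *
    coneInt d (fun p => f p * g p * p.2 ^ β * (1 - p.2) ^ γ)

/-- The (classical) Jacobi basis polynomial `S_{m,Y}^{n,(β,γ)}` on the cone. -/
def coneS (d : ℕ) (β γ : ℝ) (n m : ℕ) (Y : Euc d → ℝ) : Euc d × ℝ → ℝ :=
  fun p => jacobiP (2 * m + β + d - 1) γ (n - m) (1 - 2 * p.2) * Y p.1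

/-- The norm square `h_{n,m}^{β,γ}`. -/
def coneH (d : ℕ) (β γ : ℝ) (n m : ℕ) : ℝ :=
  poch (β + d) (2 * m) / poch (β + γ + d + 1) (2 * m) * hJac (2 * m + β + d - 1) γ (n - m)

/-- The orthogonal projection `proj_n^{β,γ} f` built from an orthonormal spanning family of
solid harmonics. -/
def coneProj (d : ℕ) (N : ℕ → ℕ) (Y : (m : ℕ) → Fin (N m) → Euc d → ℝ) (β γ : ℝ) (n : ℕ)
    (f : Euc d × ℝ → ℝ) : Euc d × ℝ → ℝ :=
  fun p => ∑ m ∈ Finset.range (n + 1), ∑ ℓ : Fin (N m),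
    coneInner d β γ f (coneS d β γ n m (Y m ℓ)) / coneH d β γ n m * coneS d β γ n m (Y m ℓ) p

/-- The Sobolev inner product `⟨f,g⟩_{β,-s}` on the conic surface. -/
def coneSobInner (d : ℕ) (β : ℝ) (s : ℕ) (lam : ℕ → ℝ) (f g : Euc d × ℝ → ℝ) : ℝ :=
  (1 / omegaS d) * coneInt d (fun p => pdT s f p * pdT s g p * p.2 ^ (β + s)) +
    ∑ k ∈ Finset.range s, lam k / omegaS d *
      sphInt d (fun ξ => pdT k f (ξ, 1) * pdT k g (ξ, 1))

/-- The Sobolev basis polynomial `S_{m,Y}^{n,(β,-s)}` on the cone. -/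
def coneSS (d : ℕ) (β : ℝ) (s n m : ℕ) (Y : Euc d → ℝ) : Euc d × ℝ → ℝ :=
  fun p => jacobiJneg (2 * m + β + d - 1) s (n - m) (1 - 2 * p.2) * Y p.1

/-- The Sobolev norm square `h_{m,n}^{(β,-s)}`. -/
def coneSobH (d : ℕ) (β : ℝ) (s : ℕ) (lam : ℕ → ℝ) (n m : ℕ) : ℝ :=
  if n - m < s then 2 ^ (2 * (n - m)) * lam (n - m)
  else 2 ^ ((s : ℝ) - β - 2 * m - d) * hHat ((s : ℝ) + 2 * m + β + d - 1) 0 (n - m - s)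

/-- The Sobolev orthogonal projection `proj_n^{β,-s} f`. -/
def coneSobProj (d : ℕ) (N : ℕ → ℕ) (Y : (m : ℕ) → Fin (N m) → Euc d → ℝ) (β : ℝ) (s : ℕ)
    (lam : ℕ → ℝ) (n : ℕ) (f : Euc d × ℝ → ℝ) : Euc d × ℝ → ℝ :=
  fun p => ∑ m ∈ Finset.range (n + 1), ∑ ℓ : Fin (N m),
    coneSobInner d β s lam f (coneSS d β s n m (Y m ℓ)) / coneSobH d β s lam n m *
      coneSS d β s n m (Y m ℓ) p

/-- The spherical harmonic projection `Proj_k[g]` built from the orthonormal spanning family. -/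
def sphProj (d : ℕ) (N : ℕ → ℕ) (Y : (m : ℕ) → Fin (N m) → Euc d → ℝ) (k : ℕ)
    (g : Euc d → ℝ) : Euc d → ℝ :=
  fun x => ∑ ℓ : Fin (N k), (1 / omegaS d) * sphInt d (fun ξ => g ξ * Y k ℓ ξ) * Y k ℓ x

/-- Hypotheses: `(Y_ℓ^m)` is an orthonormal spanning family of solid harmonics. -/
def IsONBasisFamily (d : ℕ) (N : ℕ → ℕ) (Y : (m : ℕ) → Fin (N m) → Euc d → ℝ) : Prop :=
  (∀ m ℓ, IsSolidHarmonic d m (Y m ℓ)) ∧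
  (∀ m (ℓ ℓ' : Fin (N m)),
    (1 / omegaS d) * sphInt d (fun ξ => Y m ℓ ξ * Y m ℓ' ξ) = if ℓ = ℓ' then 1 else 0) ∧
  (∀ m (Z : Euc d → ℝ), IsSolidHarmonic d m Z →
    ∃ c : Fin (N m) → ℝ, ∀ x, Z x = ∑ ℓ : Fin (N m), c ℓ * Y m ℓ x)


/-!
For `n - m ≥ s`, Cauchy's formula for repeated integration identifies `J_{n-m}^{(a,-s)}` with
the `s`-fold antiderivative of `P̂_{n-m-s}^{(a+s,0)}` vanishing at `-1`. Differentiating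
`k ≤ s` times in `t` through `1 - 2t` gives `(-2)^k` times the `(s-k)`-fold antiderivative:
for `k = s` this is `P̂` itself, and for `k < s` it vanishes at `t = 1`, i.e. at `1 - 2t = -1`.
For `n - m < s`, `J_{n-m}(1 - 2t) = (2 - 2t)^{n-m}/(n-m)!` has degree `< s`, and its
derivatives at `t = 1` single out `k = n - m`.
-/

open intervalIntegral

theorem hasDerivAt_sub_pow_div_factorial (q : ℕ) (t x : ℝ) :
    HasDerivAt (fun u => (t - u) ^ (q + 1) / (q + 1).factorial)
      (-((t - x) ^ q / q.factorial)) x := by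
  have h : HasDerivAt (fun u => (t - u) ^ (q + 1)) (-((q + 1) * (t - x) ^ q)) x := by
    simpa using ((hasDerivAt_id x).const_sub t).fun_pow (q + 1)
  refine (h.div_const _).congr_deriv ?_
  rw [Nat.factorial_succ]
  push_cast
  field_simp

def iterIntegral (a : ℝ) (f : ℝ → ℝ) : ℕ → ℝ → ℝ
  | 0 => f
  | k + 1 => fun t => ∫ u in a..t, iterIntegral a f k u

theorem iterIntegral_self {a : ℝ} {f : ℝ → ℝ} {k : ℕ} (hk : k ≠ 0) :
    iterIntegral a f k a = 0 := by
  obtain ⟨k, rfl⟩ := Nat.exists_eq_succ_of_ne_zero hk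
  exact integral_same

section iterIntegral

variable (a : ℝ) {f : ℝ → ℝ}

theorem continuous_iterIntegral (hf : Continuous f) : ∀ k, Continuous (iterIntegral a f k)
  | 0 => hf
  | k + 1 =>
    continuous_primitive (fun _ _ => (continuous_iterIntegral hf k).intervalIntegrable _ _) a

theorem hasDerivAt_iterIntegral_succ (hf : Continuous f) (k : ℕ) (t : ℝ) :
    HasDerivAt (iterIntegral a f (k + 1)) (iterIntegral a f k t) t :=
  ((continuous_iterIntegral a hf k).integral_hasStrictDerivAt a t).hasDerivAt

/-- Cauchy's formula for repeated integration. -/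
theorem integral_sub_pow_div_factorial_mul_iterIntegral (hf : Continuous f) (q i : ℕ) (t : ℝ) :
    ∫ u in a..t, (t - u) ^ q / q.factorial * iterIntegral a f i u
      = iterIntegral a f (q + 1 + i) t := by
  induction q generalizing i with
  | zero =>
    simp only [pow_zero, Nat.factorial_zero, Nat.cast_one, div_one, one_mul, zero_add,
      Nat.add_comm 1 i]
    rfl
  | succ q ih =>
    have ibp := integral_mul_deriv_eq_deriv_mul (a := a) (b := t)
      (fun x _ => hasDerivAt_sub_pow_div_factorial q t x)
      (fun x _ => hasDerivAt_iterIntegral_succ a hf i x)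
      ((Continuous.intervalIntegrable (by fun_prop) _ _))
      ((continuous_iterIntegral a hf i).intervalIntegrable _ _)
    rw [ibp, iterIntegral_self i.succ_ne_zero]
    simp only [sub_self, ne_eq, Nat.add_eq_zero_iff, one_ne_zero, and_false, not_false_eq_true,
      zero_pow, zero_div, zero_mul, mul_zero, neg_mul, intervalIntegral.integral_neg,
      sub_neg_eq_add, zero_add]
    rw [ih (i + 1)]
    congr 1
    omega

end iterIntegral

theorem iteratedDeriv_comp_const_sub_mul_of_hasDerivAt_succ {G : ℕ → ℝ → ℝ}
    (hG : ∀ i x, HasDerivAt (G (i + 1)) (G i x) x) (c b : ℝ) {k p : ℕ} (hkp : k ≤ p) :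
    iteratedDeriv k (fun τ => G p (c - b * τ)) = fun t => (-b) ^ k * G (p - k) (c - b * t) := by
  induction k with
  | zero => simp
  | succ k ih =>
    rw [iteratedDeriv_succ, ih (by omega)]
    funext t
    have hGk : HasDerivAt (G (p - k)) (G (p - (k + 1)) (c - b * t)) (c - b * t) := by
      rw [show p - k = p - (k + 1) + 1 by omega]
      exact hG _ _
    have hlin : HasDerivAt (fun τ => c - b * τ) (-b) t := by
      simpa using ((hasDerivAt_id t).const_mul b).const_sub c
    have hd : HasDerivAt (fun t => (-b) ^ k * G (p - k) (c - b * t))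
        ((-b) ^ k * (G (p - (k + 1)) (c - b * t) * -b)) t :=
      (hGk.comp t hlin).const_mul _
    rw [hd.deriv]
    ring

theorem iteratedDeriv_one_add_one_sub_two_mul_pow (j k : ℕ) (t : ℝ) :
    iteratedDeriv k (fun τ : ℝ => (1 + (1 - 2 * τ)) ^ j) t
      = (-2) ^ j * iteratedDeriv k (fun x : ℝ => x ^ j) (t - 1) := by
  have h : (fun τ : ℝ => (1 + (1 - 2 * τ)) ^ j) = fun τ => (-2) ^ j * (τ - 1) ^ j := by
    funext τ
    rw [← mul_pow]
    ring
  rw [h, iteratedDeriv_const_mul_field]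
  exact congrArg _ (congrFun (iteratedDeriv_comp_sub_const k (fun x : ℝ => x ^ j) 1) t)

theorem continuous_jacobiPhat_s8 (a b : ℝ) (n : ℕ) : Continuous (jacobiPhat a b n) := by
  unfold jacobiPhat jacobiP
  fun_prop

theorem jacobiJ_eq_iterIntegral {a b : ℝ} {s n : ℕ} (hs : s ≠ 0) (hsn : s ≤ n) :
    jacobiJ a b s n = iterIntegral (-1) (jacobiPhat a b (n - s)) s := by
  funext t
  obtain ⟨q, rfl⟩ := Nat.exists_eq_succ_of_ne_zero hs
  rw [jacobiJ, if_neg (by omega), Nat.succ_sub_one]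
  exact integral_sub_pow_div_factorial_mul_iterIntegral _ (continuous_jacobiPhat_s8 a b _) q 0 t

theorem iteratedDeriv_jacobiJ_one_sub_two_mul_of_le (a b : ℝ) {s n k : ℕ} (hs : s ≠ 0)
    (hsn : s ≤ n) (hks : k ≤ s) (t : ℝ) :
    iteratedDeriv k (fun τ => jacobiJ a b s n (1 - 2 * τ)) t
      = (-2) ^ k * iterIntegral (-1) (jacobiPhat a b (n - s)) (s - k) (1 - 2 * t) := by
  rw [jacobiJ_eq_iterIntegral hs hsn, iteratedDeriv_comp_const_sub_mul_of_hasDerivAt_succ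
    (hasDerivAt_iterIntegral_succ _ (continuous_jacobiPhat_s8 a b _)) 1 2 hks]

theorem iteratedDeriv_jacobiJ_one_sub_two_mul_of_lt (a b : ℝ) {s n : ℕ} (hns : n < s) (k : ℕ)
    (t : ℝ) :
    iteratedDeriv k (fun τ => jacobiJ a b s n (1 - 2 * τ)) t
      = (-2) ^ n / n.factorial * iteratedDeriv k (fun x : ℝ => x ^ n) (t - 1) := by
  simp only [jacobiJ, if_pos hns, iteratedDeriv_div_const,
    iteratedDeriv_one_add_one_sub_two_mul_pow]
  ring

theorem pdT_coneSS_apply (d : ℕ) (β : ℝ) (s n m k : ℕ) (Y : Euc d → ℝ) (x : Euc d) (t : ℝ) :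
    pdT k (coneSS d β s n m Y) (x, t)
      = iteratedDeriv k (fun τ => jacobiJ (2 * m + β + d - 1 + s) 0 s (n - m) (1 - 2 * τ)) t
          * Y x := by
  show iteratedDeriv k (fun τ => jacobiJneg (2 * m + β + d - 1) s (n - m) (1 - 2 * τ) * Y x) t = _
  exact iteratedDeriv_mul_const_field _ _

theorem pdT_coneSS_general (d : ℕ) (s : ℕ) (hs : 1 ≤ s) (β : ℝ)
    (n m : ℕ)
    (Y : Euc d → ℝ) :
    ((m + s ≤ n → ∀ (x : Euc d) (t : ℝ),
        pdT s (coneSS d β s n m Y) (x, t)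
          = (-2 : ℝ) ^ s * jacobiA ((s : ℝ) + 2 * m + β + d - 1) 0 (n - s - m)
              * jacobiP ((s : ℝ) + 2 * m + β + d - 1) 0 (n - s - m) (1 - 2 * t) * Y x) ∧
      (n < m + s → ∀ (x : Euc d) (t : ℝ), pdT s (coneSS d β s n m Y) (x, t) = 0)) ∧
    (∀ k : ℕ, 1 ≤ k → k ≤ s - 1 → ∀ ξ : Metric.sphere (0 : Euc d) 1,
      (n < m + s →
        pdT k (coneSS d β s n m Y) ((ξ : Euc d), 1)
          = if k = n - m then (-2 : ℝ) ^ k * Y (ξ : Euc d) else 0) ∧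
      (m + s ≤ n → pdT k (coneSS d β s n m Y) ((ξ : Euc d), 1) = 0)) := by
  have hs0 : s ≠ 0 := by omega
  refine ⟨⟨fun hsn x t => ?_, fun hns x t => ?_⟩,
    fun k _ hks ξ => ⟨fun hns => ?_, fun hsn => ?_⟩⟩
  · rw [pdT_coneSS_apply, iteratedDeriv_jacobiJ_one_sub_two_mul_of_le _ _ hs0 (by omega) le_rfl,
      Nat.sub_self, show 2 * (m : ℝ) + β + d - 1 + s = s + 2 * m + β + d - 1 by ring,
      show n - m - s = n - s - m by omega]
    simp only [iterIntegral, jacobiPhat, mul_assoc]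
  · rw [pdT_coneSS_apply, iteratedDeriv_jacobiJ_one_sub_two_mul_of_lt _ _ (by omega),
      iteratedDeriv_pow, Nat.descFactorial_eq_zero_iff_lt.mpr (by omega)]
    simp
  · rw [pdT_coneSS_apply, iteratedDeriv_jacobiJ_one_sub_two_mul_of_lt _ _ (by omega), sub_self,
      iteratedDeriv_fun_pow_zero]
    split_ifs with hk
    · subst hk
      field_simp
    · simp
  · rw [pdT_coneSS_apply,
      iteratedDeriv_jacobiJ_one_sub_two_mul_of_le _ _ hs0 (by omega) (by omega),
      show (1 : ℝ) - 2 * 1 = -1 by norm_num, iterIntegral_self (by omega)]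
    simp

/-- derivatives of the Sobolev basis polynomials `S_{m,Y}^{n,(β,-s)}`. -/
theorem pdT_coneSS (d : ℕ) (hd : 2 ≤ d) (s : ℕ) (hs : 1 ≤ s) (β : ℝ)
    (hβ : -(d : ℝ) - s < β) (n m : ℕ) (hm : m ≤ n)
    (Y : Euc d → ℝ) (hY : IsSolidHarmonic d m Y) :
    ((m + s ≤ n → ∀ (x : Euc d) (t : ℝ),
        pdT s (coneSS d β s n m Y) (x, t)
          = (-2 : ℝ) ^ s * jacobiA ((s : ℝ) + 2 * m + β + d - 1) 0 (n - s - m)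
              * jacobiP ((s : ℝ) + 2 * m + β + d - 1) 0 (n - s - m) (1 - 2 * t) * Y x) ∧
      (n < m + s → ∀ (x : Euc d) (t : ℝ), pdT s (coneSS d β s n m Y) (x, t) = 0)) ∧
    (∀ k : ℕ, 1 ≤ k → k ≤ s - 1 → ∀ ξ : Metric.sphere (0 : Euc d) 1,
      (n < m + s →
        pdT k (coneSS d β s n m Y) ((ξ : Euc d), 1)
          = if k = n - m then (-2 : ℝ) ^ k * Y (ξ : Euc d) else 0) ∧
      (m + s ≤ n → pdT k (coneSS d β s n m Y) ((ξ : Euc d), 1) = 0)) :=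
  pdT_coneSS_general d s hs β n m Y
end
end
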